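/- If each branch's choice function satisfies IRC, substitutability, and the law of aggregate demand, then the outcome of the cumulative offer process is a stable outcome. -/

import Mathlib

open Finset
variable {I B X : Type*} [DecidableEq I] [DecidableEq B] [DecidableEq X] [Fintype X]

/-- Contracts currently held by the branches: from the cumulative offer set `A`,
each branch holds its choice from the offers addressed to it. -/
noncomputable def held (br : X → B) (C : B → Finset X → Finset X) (A : Finset X) : Finset X :=
  A.filter (fun x => x ∈ C (br x) (A.filter (fun y => br y = br x)))

/-- Agent `i` has no currently held contract. -/
noncomputable def FreeAgent (ag : X → I) (br : X → B) (C : B → Finset X → Finset X)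
    (A : Finset X) (i : I) : Prop :=
  ∀ x ∈ held br C A, ag x ≠ i

/-- Contract `x` is a valid next proposal at cumulative offer set `A`: its agent is
free, `x` is acceptable, not yet proposed, and most preferred among the agent's
acceptable not-yet-proposed contracts (`none` is the outside option; higher
`P`-value = more preferred). -/
noncomputable def Proposable (ag : X → I) (br : X → B) (C : B → Finset X → Finset X)
    (P : I → Option X → ℕ) (A : Finset X) (x : X) : Prop :=
  x ∉ A ∧ P (ag x) none < P (ag x) (some x) ∧ FreeAgent ag br C A (ag x) ∧
    ∀ y : X, ag y = ag x → y ∉ A → P (ag y) none < P (ag y) (some y) →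
      P (ag x) (some y) ≤ P (ag x) (some x)

/-- A policy resolving the arbitrary choice of proposer: it returns a valid proposal
whenever one exists, and `none` exactly when no agent can propose. -/
noncomputable def ValidPolicy (ag : X → I) (br : X → B) (C : B → Finset X → Finset X)
    (P : I → Option X → ℕ) (pol : Finset X → Option X) : Prop :=
  ∀ A : Finset X, (∀ x, pol A = some x → Proposable ag br C P A x) ∧
    (pol A = none → ∀ x, ¬ Proposable ag br C P A x)

/-- The cumulative offer process: starting from offer set `A`, repeatedly add the
proposal chosen by the policy (fuel-indexed; `Fintype.card X + 1` steps suffice). -/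
noncomputable def cop (pol : Finset X → Option X) : ℕ → Finset X → Finset X
  | 0, A => A
  | n + 1, A =>
    match pol A with
    | none => A
    | some x => cop pol n (insert x A)

/-- The outcome of the cumulative offer process. -/
noncomputable def outcome (br : X → B) (C : B → Finset X → Finset X)
    (pol : Finset X → Option X) : Finset X :=
  held br C (cop pol (Fintype.card X + 1) ∅)

/-- Irrelevance of rejected contracts. -/
def IRCb (Cb : Finset X → Finset X) : Prop :=
  ∀ (Y : Finset X) (z : X), z ∉ Y → z ∉ Cb (insert z Y) → Cb Y = Cb (insert z Y)

/-- Substitutability. -/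
def Substb (Cb : Finset X → Finset X) : Prop :=
  ∀ (Y : Finset X) (z z' : X), z ∉ Cb (insert z Y) → z ∉ Cb (insert z' (insert z Y))

/-- Law of aggregate demand. -/
def LADb (Cb : Finset X → Finset X) : Prop :=
  ∀ Y Y' : Finset X, Y ⊆ Y' → (Cb Y).card ≤ (Cb Y').card

/-- Stability of an outcome `Z`: feasibility, individual rationality for agents and
branches, and absence of a blocking set. -/
def IsStable (ag : X → I) (br : X → B) (C : B → Finset X → Finset X)
    (P : I → Option X → ℕ) (Z : Finset X) : Prop :=
  (∀ x ∈ Z, ∀ y ∈ Z, ag x = ag y → x = y) ∧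
  (∀ x ∈ Z, P (ag x) none < P (ag x) (some x)) ∧
  (∀ b, C b (Z.filter (fun x => br x = b)) = Z.filter (fun x => br x = b)) ∧
  ¬ ∃ (b : B) (Y : Finset X), (∀ y ∈ Y, br y = b) ∧
      Y ≠ C b (Z.filter (fun x => br x = b)) ∧
      Y = C b ((Z ∪ Y).filter (fun x => br x = b)) ∧
      ∀ y ∈ Y, P (ag y) none < P (ag y) (some y) ∧
        ∀ z ∈ Z ∪ Y, ag z = ag y → P (ag y) (some z) ≤ P (ag y) (some y)

/-!
Substitutability means that a contract a branch has rejected stays rejected as further offers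
arrive, so an agent who proposes only while free never has two contracts held at once, and each
contract she has proposed is weakly preferred to every acceptable one she has not. When no agent
can propose, every contract some agent weakly prefers to her held one has therefore been offered,
so a blocking set lies inside the final offer set `A`. By IRC a branch chooses the same from every
set between its held contracts and its offers in `A`, which rules out the block.
-/

section ChoiceFunction

variable {Cb : Finset X → Finset X}

omit [Fintype X] in
theorem Substb.notMem_insert (hsub : Substb Cb) {Y : Finset X} {x : X} (z : X)
    (hx : x ∈ Y) (hxC : x ∉ Cb Y) : x ∉ Cb (insert z Y) := by
  have hY : insert x (Y.erase x) = Y := insert_erase hx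
  simpa only [hY] using hsub (Y.erase x) x z (by rwa [hY])

omit [Fintype X] in
theorem IRCb.apply_eq_of_subset (hirc : IRCb Cb) :
    ∀ {S T : Finset X}, Cb S ⊆ T → T ⊆ S → Cb T = Cb S := by
  intro S
  induction S using strongInduction with
  | _ S ih =>
    intro T hCT hTS
    by_cases hST : S ⊆ T
    · rw [Subset.antisymm hTS hST]
    obtain ⟨z, hzS, hzT⟩ := not_subset.mp hST
    have hz : Cb (S.erase z) = Cb S := by
      simpa only [insert_erase hzS] using
        hirc (S.erase z) z (notMem_erase z S) (by rw [insert_erase hzS]; exact fun h => hzT (hCT h))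
    rw [← hz]
    exact ih _ (erase_ssubset hzS) (hz ▸ hCT) fun w hw =>
      mem_erase.mpr ⟨by rintro rfl; exact hzT hw, hTS hw⟩

omit [Fintype X] in
theorem IRCb.apply_apply (hirc : IRCb Cb) {S : Finset X} (hS : Cb S ⊆ S) : Cb (Cb S) = Cb S :=
  hirc.apply_eq_of_subset Subset.rfl hS

end ChoiceFunction

section Held

variable {br : X → B} {C : B → Finset X → Finset X}

omit [Fintype X] in
theorem mem_held {A : Finset X} {x : X} :
    x ∈ held br C A ↔ x ∈ A ∧ x ∈ C (br x) (A.filter (fun y => br y = br x)) :=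
  mem_filter

omit [Fintype X] in
theorem held_subset (A : Finset X) : held br C A ⊆ A := filter_subset _ _

omit [Fintype X] in
theorem filter_held (hCb : ∀ b Y, C b Y ⊆ Y.filter (fun x => br x = b)) (A : Finset X) (b : B) :
    (held br C A).filter (fun x => br x = b) = C b (A.filter (fun y => br y = b)) := by
  ext x
  rw [mem_filter, mem_held]
  constructor
  · rintro ⟨⟨-, hxC⟩, hxb⟩
    rwa [hxb] at hxC
  · intro hxC
    obtain ⟨hxA, hxb⟩ := mem_filter.mp (filter_subset _ _ (hCb b _ hxC))
    exact ⟨⟨hxA, hxb ▸ hxC⟩, hxb⟩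

omit [Fintype X] in
theorem mem_held_of_mem_held_insert (hsub : ∀ b, Substb (C b)) {A : Finset X} {z x : X}
    (hx : x ∈ A) (hxz : x ∈ held br C (insert z A)) : x ∈ held br C A := by
  rw [mem_held] at hxz ⊢
  refine ⟨hx, ?_⟩
  by_contra hxC
  obtain ⟨-, hxC'⟩ := hxz
  rw [filter_insert] at hxC'
  split_ifs at hxC'
  · exact (hsub (br x)).notMem_insert (Y := A.filter fun y => br y = br x) z
      (mem_filter.mpr ⟨hx, rfl⟩) hxC hxC'
  · exact hxC hxC'

end Held

section CumulativeOffers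

variable {ag : X → I} {br : X → B} {C : B → Finset X → Finset X}
  {P : I → Option X → ℕ}

structure CopInv (ag : X → I) (br : X → B) (C : B → Finset X → Finset X)
    (P : I → Option X → ℕ) (A : Finset X) : Prop where
  acceptable : ∀ x ∈ A, P (ag x) none < P (ag x) (some x)
  held_agent_inj : ∀ x ∈ held br C A, ∀ y ∈ held br C A, ag x = ag y → x = y
  proposed_preferred : ∀ x ∈ A, ∀ y, ag y = ag x → y ∉ A →
    P (ag x) none < P (ag x) (some y) → P (ag x) (some y) ≤ P (ag x) (some x)

omit [DecidableEq I] [Fintype X] in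
theorem CopInv.empty : CopInv ag br C P ∅ where
  acceptable := by simp
  held_agent_inj := by simp [held]
  proposed_preferred := by simp

omit [DecidableEq I] [Fintype X] in
theorem CopInv.propose (hsub : ∀ b, Substb (C b)) {A : Finset X} {z : X}
    (hz : Proposable ag br C P A z) (hA : CopInv ag br C P A) : CopInv ag br C P (insert z A) := by
  obtain ⟨hzA, hz_acc, hz_free, hz_best⟩ := hz
  have held_old : ∀ w ∈ held br C (insert z A), w ≠ z → w ∈ held br C A := fun w hw hwz =>
    mem_held_of_mem_held_insert hsub
      ((mem_insert.mp (held_subset _ hw)).resolve_left hwz) hw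
  refine ⟨?_, ?_, ?_⟩
  · intro x hx
    rcases mem_insert.mp hx with rfl | hx
    · exact hz_acc
    · exact hA.acceptable x hx
  · intro x hx y hy hxy
    by_cases hxz : x = z <;> by_cases hyz : y = z
    · rw [hxz, hyz]
    · subst hxz
      exact absurd hxy.symm (hz_free y (held_old y hy hyz))
    · subst hyz
      exact absurd hxy (hz_free x (held_old x hx hxz))
    · exact hA.held_agent_inj x (held_old x hx hxz) y (held_old y hy hyz) hxy
  · intro x hx y hyx hy hy_acc
    have hyA : y ∉ A := fun h => hy (mem_insert_of_mem h)
    rcases mem_insert.mp hx with rfl | hx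
    · exact hz_best y hyx hyA (by rwa [hyx])
    · exact hA.proposed_preferred x hx y hyx hyA hy_acc

variable {pol : Finset X → Option X}

omit [DecidableEq I] [Fintype X] in
theorem CopInv.cop (hpol : ValidPolicy ag br C P pol) (hsub : ∀ b, Substb (C b)) (n : ℕ) :
    ∀ {A : Finset X}, CopInv ag br C P A → CopInv ag br C P (cop pol n A) := by
  induction n with
  | zero => exact id
  | succ n ih =>
    intro A hA
    rw [_root_.cop]
    cases hp : pol A with
    | none => exact hA
    | some z => exact ih (hA.propose hsub ((hpol A).1 z hp))

omit [DecidableEq I] in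
theorem not_proposable_cop (hpol : ValidPolicy ag br C P pol) (n : ℕ) :
    ∀ {A : Finset X}, Fintype.card X < A.card + n →
      ∀ x, ¬ Proposable ag br C P (cop pol n A) x := by
  induction n with
  | zero => intro A h; exact absurd (card_le_univ A) (by omega)
  | succ n ih =>
    intro A h
    rw [cop]
    cases hp : pol A with
    | none => exact (hpol A).2 hp
    | some z =>
      have hcard := card_insert_of_notMem ((hpol A).1 z hp).1
      exact ih (by omega)

theorem exists_proposable {A : Finset X} {y : X} (hfree : FreeAgent ag br C A (ag y))
    (hyA : y ∉ A) (hy_acc : P (ag y) none < P (ag y) (some y)) :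
    ∃ x, Proposable ag br C P A x := by
  set S := univ.filter fun w => ag w = ag y ∧ w ∉ A ∧ P (ag w) none < P (ag w) (some w)
  obtain ⟨m, hm, hm_max⟩ :=
    exists_max_image S (fun w => P (ag y) (some w)) ⟨y, by simp [S, hyA, hy_acc]⟩
  simp only [S, mem_filter, mem_univ, true_and] at hm hm_max
  obtain ⟨hmy, hmA, hm_acc⟩ := hm
  refine ⟨m, hmA, hm_acc, hmy ▸ hfree, fun w hwm hwA hw_acc => ?_⟩
  rw [hmy] at hwm ⊢
  exact hm_max w ⟨hwm, hwA, hw_acc⟩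

theorem mem_of_prefers_of_not_proposable (hP : ∀ i, Function.Injective (P i)) {A : Finset X}
    (hA : CopInv ag br C P A) (hterm : ∀ x, ¬ Proposable ag br C P A x) {y : X}
    (hy_acc : P (ag y) none < P (ag y) (some y))
    (hy_pref : ∀ z ∈ held br C A, ag z = ag y → P (ag y) (some z) ≤ P (ag y) (some y)) :
    y ∈ A := by
  by_contra hyA
  by_cases hfree : FreeAgent ag br C A (ag y)
  · exact (exists_proposable hfree hyA hy_acc).elim hterm
  obtain ⟨z, hz, hzy⟩ : ∃ z ∈ held br C A, ag z = ag y := by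
    simpa [FreeAgent] using hfree
  have hzA := held_subset A hz
  have hyz : P (ag y) (some y) ≤ P (ag y) (some z) := by
    simpa only [hzy] using hA.proposed_preferred z hzA y hzy.symm hyA (hzy ▸ hy_acc)
  have hzy_eq : z = y := Option.some_injective X (hP (ag y) (le_antisymm (hy_pref z hz hzy) hyz))
  exact hyA (hzy_eq ▸ hzA)

theorem isStable_held_of_not_proposable (hCb : ∀ b Y, C b Y ⊆ Y.filter (fun x => br x = b))
    (hirc : ∀ b, IRCb (C b)) (hP : ∀ i, Function.Injective (P i)) {A : Finset X}
    (hA : CopInv ag br C P A) (hterm : ∀ x, ¬ Proposable ag br C P A x) :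
    IsStable ag br C P (held br C A) := by
  set Z := held br C A
  have hZ_stable : ∀ b, C b (Z.filter (fun x => br x = b)) = Z.filter (fun x => br x = b) :=
    fun b => by
      rw [filter_held hCb]
      exact (hirc b).apply_apply ((hCb b _).trans (filter_subset _ _))
  refine ⟨hA.held_agent_inj, fun x hx => hA.acceptable x (held_subset A hx), hZ_stable, ?_⟩
  rintro ⟨b, Y, -, hY_ne, hY_choice, hY_pref⟩
  have hYA : Y ⊆ A := fun y hy =>
    mem_of_prefers_of_not_proposable hP hA hterm (hY_pref y hy).1
      fun z hz => (hY_pref y hy).2 z (mem_union_left _ hz)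
  have hZY : C b ((Z ∪ Y).filter (fun x => br x = b)) = C b (A.filter (fun y => br y = b)) :=
    (hirc b).apply_eq_of_subset
      (filter_held hCb A b ▸ filter_subset_filter _ subset_union_left)
      (filter_subset_filter _ (union_subset (held_subset A) hYA))
  exact hY_ne (by rw [hZ_stable, filter_held hCb, hY_choice, hZY])

end CumulativeOffers

theorem cop_stable_general (ag : X → I) (br : X → B) (C : B → Finset X → Finset X)
    (P : I → Option X → ℕ)
    (hCb : ∀ b Y, C b Y ⊆ Y.filter (fun x => br x = b))
    (hirc : ∀ b, IRCb (C b)) (hsub : ∀ b, Substb (C b))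
    (hP : ∀ i, Function.Injective (P i))
    (pol : Finset X → Option X) (hpol : ValidPolicy ag br C P pol) :
    IsStable ag br C P (outcome br C pol) :=
  isStable_held_of_not_proposable hCb hirc hP (CopInv.empty.cop hpol hsub _)
    (not_proposable_cop hpol _ (by simp))

/-- With IRC, substitutability and LAD, the cumulative offer process produces a
stable outcome. -/
theorem cop_stable (ag : X → I) (br : X → B) (C : B → Finset X → Finset X)
    (P : I → Option X → ℕ)
    (hCb : ∀ b Y, C b Y ⊆ Y.filter (fun x => br x = b))
    (hfeas : ∀ b Y, ∀ x ∈ C b Y, ∀ y ∈ C b Y, ag x = ag y → x = y)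
    (hirc : ∀ b, IRCb (C b)) (hsub : ∀ b, Substb (C b)) (hlad : ∀ b, LADb (C b))
    (hP : ∀ i, Function.Injective (P i))
    (pol : Finset X → Option X) (hpol : ValidPolicy ag br C P pol) :
    IsStable ag br C P (outcome br C pol) :=
  cop_stable_general ag br C P hCb hirc hsub hP pol hpol
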